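/- arXiv:2312.11249 — 2 statements merged into one kernel-verified Lean document; each statement's English description precedes it below -/
import Mathlib

section
/- Let d ≥ 3, 2* = 2d/(d−2), and let θ ∈ [0,1] with θ ≠ 1/d. Then there is NO constant C > 0 such that ( ∫_{ℝ^d} |∇u|² dx − ((d−2)/2)² ∫_{ℝ^d} |u(x)|²/|x|² dx )^{θ} · ( ∫_{ℝ^d} |u(x)|²/|x|² dx )^{1−θ} ≥ C ‖u‖_{L^{2*}(ℝ^d)}² holds for all radially symmetric u ∈ Ḣ¹(ℝ^d). -/
open MeasureTheory

noncomputable section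

/-- `u` has distributional (weak) gradient `Du` on `ℝ^d`, both locally integrable. -/
def HasWeakGradient {d : ℕ} (u : EuclideanSpace ℝ (Fin d) → ℝ)
    (Du : EuclideanSpace ℝ (Fin d) → (EuclideanSpace ℝ (Fin d) →L[ℝ] ℝ)) : Prop :=
  LocallyIntegrable u volume ∧ LocallyIntegrable Du volume ∧
    ∀ φ : EuclideanSpace ℝ (Fin d) → ℝ, ContDiff ℝ (⊤ : ℕ∞) φ → HasCompactSupport φ →
      ∀ w : EuclideanSpace ℝ (Fin d),
        ∫ x, u x * fderiv ℝ φ x w = - ∫ x, Du x w * φ x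

/-- `u` is radially symmetric: its value depends only on `|x|`. -/
def IsRadial {d : ℕ} (u : EuclideanSpace ℝ (Fin d) → ℝ) : Prop :=
  ∀ x y : EuclideanSpace ℝ (Fin d), ‖x‖ = ‖y‖ → u x = u y

open Real Set Function Metric

namespace Stmt9Aux

def B : ContDiffBump ((3:ℝ)/2) := ⟨1/4, 1/2, by norm_num, by norm_num⟩

def g : ℝ → ℝ := fun s => B s

lemma g_smooth : ContDiff ℝ (⊤ : ℕ∞) g := B.contDiff
lemma g_cpt : HasCompactSupport g := B.hasCompactSupport
lemma g_nonneg (s : ℝ) : 0 ≤ g s := B.nonneg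
lemma g_one : g (3/2) = 1 := B.one_of_mem_closedBall (by
  simp only [Metric.mem_closedBall, dist_self, B]; norm_num)
lemma g_tsupp : tsupport g ⊆ Icc 1 2 := by
  rw [show g = ⇑B from rfl, B.tsupport_eq]
  intro x hx
  simp only [Metric.mem_closedBall, Real.dist_eq, B] at hx
  rcases abs_le.1 hx with ⟨h1, h2⟩
  constructor <;> [linarith; linarith]

lemma g_zero {s : ℝ} (hs : s ∉ Icc (1:ℝ) 2) : g s = 0 :=
  image_eq_zero_of_notMem_tsupport (fun h => hs (g_tsupp h))

lemma dg_zero {s : ℝ} (hs : s ∉ Icc (1:ℝ) 2) : deriv g s = 0 := by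
  have : s ∉ tsupport g := fun h => hs (g_tsupp h)
  have : s ∉ support (deriv g) := fun h => this (support_deriv_subset h)
  simpa [Function.mem_support, not_not] using this

lemma g_cont : Continuous g := g_smooth.continuous
lemma dg_cont : Continuous (deriv g) := (g_smooth.of_le (by exact_mod_cast le_top)).continuous_deriv (le_refl 1)
lemma dg_cpt : HasCompactSupport (deriv g) := g_cpt.deriv

end Stmt9Aux

namespace Stmt9Aux

abbrev Euc (d : ℕ) := EuclideanSpace ℝ (Fin d)

def cst (d : ℕ) : ℝ := ((d:ℝ) - 2)/2
def sarg (l t : ℝ) : ℝ := Real.log t / (2*l)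
def ψ (d : ℕ) (l t : ℝ) : ℝ := t ^ (-(cst d)/2) * g (sarg l t)
def dψ (d : ℕ) (l t : ℝ) : ℝ :=
  t ^ (-(cst d)/2 - 1) * ((-(cst d)/2) * g (sarg l t) + (1/(2*l)) * deriv g (sarg l t))
def U (d : ℕ) (l : ℝ) : Euc d → ℝ := fun x => ψ d l (‖x‖^2)
def DU (d : ℕ) (l : ℝ) : Euc d → (Euc d →L[ℝ] ℝ) :=
  fun x => (2 * dψ d l (‖x‖^2)) • innerSL ℝ x

lemma sarg_nmem_small (hl : 0 < l) {t : ℝ} (h0 : 0 ≤ t) (h1 : t < 1) :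
    sarg l t ∉ Icc (1:ℝ) 2 := by
  have hlog : Real.log t ≤ 0 := Real.log_nonpos h0 h1.le
  have : sarg l t ≤ 0 := div_nonpos_iff.2 (Or.inr ⟨hlog, by linarith⟩)
  intro h; exact absurd (le_trans h.1 (le_of_eq rfl)) (by linarith)

lemma sarg_nmem_big (hl : 0 < l) {t : ℝ} (ht : Real.exp (4*l) < t) :
    sarg l t ∉ Icc (1:ℝ) 2 := by
  have h0 : (0:ℝ) < Real.exp (4*l) := Real.exp_pos _
  have hlog : 4*l < Real.log t := (Real.lt_log_iff_exp_lt (by linarith)).2 ht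
  have : 2 < sarg l t := by
    rw [sarg, lt_div_iff₀ (by linarith)]; linarith
  intro h; exact absurd h.2 (by linarith)

lemma ψ_zero (d : ℕ) {l t : ℝ} (h : sarg l t ∉ Icc (1:ℝ) 2) : ψ d l t = 0 := by
  simp [ψ, g_zero h]

lemma dψ_zero (d : ℕ) {l t : ℝ} (h : sarg l t ∉ Icc (1:ℝ) 2) : dψ d l t = 0 := by
  simp [dψ, g_zero h, dg_zero h]

lemma U_zero_small (d : ℕ) (hl : 0 < l) {x : Euc d} (hx : ‖x‖ < 1) : U d l x = 0 :=
  ψ_zero d (sarg_nmem_small hl (by positivity) (by nlinarith [norm_nonneg x]))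

lemma DU_zero_small (d : ℕ) (hl : 0 < l) {x : Euc d} (hx : ‖x‖ < 1) : DU d l x = 0 := by
  rw [DU, dψ_zero d (sarg_nmem_small hl (by positivity) (by nlinarith [norm_nonneg x]))]
  simp

lemma U_zero_big (d : ℕ) (hl : 0 < l) {x : Euc d} (hx : Real.exp (2*l) < ‖x‖) :
    U d l x = 0 := by
  refine ψ_zero d (sarg_nmem_big hl ?_)
  have : Real.exp (4*l) = Real.exp (2*l) * Real.exp (2*l) := by
    rw [← Real.exp_add]; ring_nf
  rw [this]; have h0 := Real.exp_pos (2*l); nlinarith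

lemma DU_zero_big (d : ℕ) (hl : 0 < l) {x : Euc d} (hx : Real.exp (2*l) < ‖x‖) :
    DU d l x = 0 := by
  rw [DU, dψ_zero d (sarg_nmem_big hl ?_)]
  · simp
  · have : Real.exp (4*l) = Real.exp (2*l) * Real.exp (2*l) := by
      rw [← Real.exp_add]; ring_nf
    rw [this]; have h0 := Real.exp_pos (2*l); nlinarith

lemma hasDerivAt_ψ (d : ℕ) (hl : 0 < l) {t : ℝ} (ht : (1:ℝ) ≤ t) :
    HasDerivAt (ψ d l) (dψ d l t) t := by
  have ht0 : t ≠ 0 := by linarith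
  have h1 : HasDerivAt (fun t : ℝ => t ^ (-(cst d)/2)) ((-(cst d)/2) * t ^ (-(cst d)/2 - 1)) t :=
    Real.hasDerivAt_rpow_const (Or.inl ht0)
  have hinner : HasDerivAt (fun t : ℝ => Real.log t / (2*l)) (t⁻¹ / (2*l)) t :=
    (Real.hasDerivAt_log ht0).div_const (2*l)
  have houter : HasDerivAt g (deriv g (sarg l t)) (sarg l t) :=
    ((g_smooth.differentiable (by simp)) (sarg l t)).hasDerivAt
  have h2 : HasDerivAt (fun t : ℝ => g (sarg l t)) (deriv g (sarg l t) * (t⁻¹ / (2*l))) t :=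
    HasDerivAt.comp t houter hinner
  have : HasDerivAt (ψ d l) ((-(cst d)/2) * t ^ (-(cst d)/2 - 1) * g (sarg l t) + t ^ (-(cst d)/2) * (deriv g (sarg l t) * (t⁻¹ / (2*l)))) t := h1.mul h2
  convert this using 1
  rw [dψ, Real.rpow_sub_one ht0]
  field_simp
end Stmt9Aux

namespace Stmt9Aux
variable {d : ℕ} {l : ℝ}

lemma hasFDerivAt_U (hl : 0 < l) (x : Euc d) : HasFDerivAt (U d l) (DU d l x) x := by
  rcases lt_or_ge ‖x‖ 1 with hx | hx
  · rw [DU_zero_small d hl hx]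
    have hmem : Metric.ball (0 : Euc d) 1 ∈ nhds x := by
      refine Metric.isOpen_ball.mem_nhds ?_
      simpa [Metric.mem_ball] using hx
    have heq : U d l =ᶠ[nhds x] (fun _ => (0:ℝ)) :=
      Filter.eventuallyEq_of_mem hmem (fun y hy => U_zero_small d hl (by simpa using hy))
    exact (hasFDerivAt_const (0:ℝ) x).congr_of_eventuallyEq heq
  · have ht : (1:ℝ) ≤ ‖x‖^2 := by nlinarith
    have hψ := hasDerivAt_ψ d hl ht
    have hsq : HasFDerivAt (fun y : Euc d => ‖y‖^2) (2 • (innerSL ℝ x)) x := by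
      have := (hasFDerivAt_id x).norm_sq
      simpa using this
    have : HasFDerivAt (U d l) (dψ d l (‖x‖^2) • (2 • innerSL ℝ x)) x := hψ.comp_hasFDerivAt x hsq
    convert this using 1
    · rfl
    rw [DU]
    rw [smul_comm]
    module

lemma U_diff (hl : 0 < l) : Differentiable ℝ (U d l) :=
  fun x => (hasFDerivAt_U hl x).differentiableAt

lemma U_cont (hl : 0 < l) : Continuous (U d l) := (U_diff hl).continuous

lemma fderiv_U (hl : 0 < l) : fderiv ℝ (U d l) = DU d l :=
  funext fun x => (hasFDerivAt_U hl x).fderiv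

lemma U_cpt (hl : 0 < l) : HasCompactSupport (U d l) := by
  apply HasCompactSupport.intro (isCompact_closedBall (0 : Euc d) (Real.exp (2*l)))
  intro x hx
  exact U_zero_big d hl (by simpa [Metric.mem_closedBall, not_le] using hx)

lemma DU_cpt (hl : 0 < l) : HasCompactSupport (DU d l) := by
  apply HasCompactSupport.intro (isCompact_closedBall (0 : Euc d) (Real.exp (2*l)))
  intro x hx
  exact DU_zero_big d hl (by simpa [Metric.mem_closedBall, not_le] using hx)

lemma DU_cont (hl : 0 < l) : Continuous (DU d l) := by
  rw [continuous_iff_continuousAt]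
  intro x
  rcases lt_or_ge ‖x‖ 1 with hx | hx
  · have hmem : Metric.ball (0 : Euc d) 1 ∈ nhds x := by
      refine Metric.isOpen_ball.mem_nhds ?_
      simpa [Metric.mem_ball] using hx
    have heq : DU d l =ᶠ[nhds x] (fun _ => (0 : Euc d →L[ℝ] ℝ)) :=
      Filter.eventuallyEq_of_mem hmem (fun y hy => DU_zero_small d hl (by simpa using hy))
    exact (continuousAt_const.congr heq.symm)
  · have ht : (1:ℝ) ≤ ‖x‖^2 := by nlinarith
    have hsq : ContinuousAt (fun y : Euc d => ‖y‖^2) x := by fun_prop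
    have hdψ : ContinuousAt (dψ d l) (‖x‖^2) := by
      have ht0 : ‖x‖^2 ≠ 0 := by positivity
      have h1 : ContinuousAt (fun t : ℝ => t ^ (-(cst d)/2 - 1)) (‖x‖^2) :=
        Real.continuousAt_rpow_const _ _ (Or.inl ht0)
      have hsargc : ContinuousAt (sarg l) (‖x‖^2) :=
        ((Real.continuousAt_log ht0).div_const _)
      exact h1.mul (((g_cont.continuousAt.comp hsargc).const_mul _).add
        ((dg_cont.continuousAt.comp hsargc).const_mul _))
    have hinner : ContinuousAt (fun y : Euc d => innerSL ℝ y) x :=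
      (innerSL ℝ).continuous.continuousAt
    have hcomp : ContinuousAt (fun y : Euc d => dψ d l (‖y‖^2)) x :=
      ContinuousAt.comp (f := fun y : Euc d => ‖y‖^2) hdψ hsq
    exact ((hcomp.const_mul 2).smul hinner)

lemma U_lip (hl : 0 < l) : ∃ K : NNReal, LipschitzWith K (U d l) := by
  have hC1 : ContDiff ℝ 1 (U d l) := by
    rw [contDiff_one_iff_fderiv]
    exact ⟨U_diff hl, by rw [fderiv_U hl]; exact DU_cont hl⟩
  exact ContDiff.lipschitzWith_of_hasCompactSupport (U_cpt hl) hC1 one_ne_zero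

end Stmt9Aux

namespace Stmt9Aux
variable {d : ℕ} {l : ℝ}

lemma U_weakGradient (hl : 0 < l) : HasWeakGradient (U d l) (DU d l) := by
  refine ⟨(U_cont hl).locallyIntegrable, (DU_cont hl).locallyIntegrable, ?_⟩
  intro φ hφ hφc w
  obtain ⟨K, hK⟩ := U_lip hl
  obtain ⟨K', hK'⟩ := ContDiff.lipschitzWith_of_hasCompactSupport hφc
    (hφ.of_le ((by simp) : (1 : WithTop ℕ∞) ≤ ((⊤ : ℕ∞) : WithTop ℕ∞))) one_ne_zero
  have key := LipschitzWith.integral_lineDeriv_mul_eq (μ := volume) hK hK' hφc w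
  have e1 : ∀ x : Euc d, lineDeriv ℝ (U d l) x w = DU d l x w := fun x =>
    ((hasFDerivAt_U hl x).hasLineDerivAt w).lineDeriv
  have e2 : ∀ x : Euc d, lineDeriv ℝ φ x (-w) = -(fderiv ℝ φ x w) := by
    intro x
    have hdφ : DifferentiableAt ℝ φ x := (hφ.differentiable (by simp)).differentiableAt
    rw [hdφ.lineDeriv_eq_fderiv, map_neg]
  simp only [e1, e2] at key
  simp only [neg_mul] at key
  rw [integral_neg] at key
  rw [show (fun x => U d l x * (fderiv ℝ φ x) w) = fun x => (fderiv ℝ φ x) w * U d l x from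
    funext fun x => mul_comm _ _]
  linarith [key]

lemma U_radial : IsRadial (U d l) := fun x y h => by simp only [U, h]

lemma U_memℒp (hl : 0 < l) (p : ENNReal) : MemLp (U d l) p volume :=
  (U_cont hl).memLp_of_hasCompactSupport (U_cpt hl)

lemma DU_memℒp (hl : 0 < l) : MemLp (fun x : Euc d => ‖DU d l x‖) 2 volume :=
  ((DU_cont hl).norm).memLp_of_hasCompactSupport ((DU_cpt hl).norm)

end Stmt9Aux

namespace Stmt9Aux
variable {d : ℕ} {l : ℝ}

lemma master (hd : 3 ≤ d) (hl : 0 < l) (h : ℝ → ℝ) :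
    ∫ x : Euc d, ‖x‖ ^ (-(d:ℝ)) * h (Real.log ‖x‖ / l)
      = ((d : ℝ) * (volume (Metric.ball (0:Euc d) 1)).toReal * l) * ∫ s, h s := by
  haveI : Nontrivial (Euc d) := by
    apply Module.nontrivial_of_finrank_pos (R := ℝ) (M := Euc d)
    rw [finrank_euclideanSpace_fin]; omega
  have key := MeasureTheory.integral_fun_norm_addHaar (volume : Measure (Euc d))
    (fun r => r ^ (-(d:ℝ)) * h (Real.log r / l))
  rw [finrank_euclideanSpace_fin] at key
  rw [key]
  have hIoi : (∫ y in Ioi (0:ℝ), y ^ (d - 1) • (y ^ (-(d:ℝ)) * h (Real.log y / l)))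
      = l * ∫ s, h s := by
    have step1 : (∫ y in Ioi (0:ℝ), y ^ (d - 1) • (y ^ (-(d:ℝ)) * h (Real.log y / l)))
        = ∫ y in Ioi (0:ℝ), y⁻¹ * h (Real.log y / l) := by
      apply setIntegral_congr_fun measurableSet_Ioi
      intro y hy
      have hy0 : (0:ℝ) < y := hy
      dsimp only
      have : (y : ℝ) ^ (d - 1) = y ^ (((d:ℝ)) - 1) := by
        rw [← Real.rpow_natCast y (d-1)]
        congr 1
        rw [Nat.cast_sub (by omega)]
        norm_num
      rw [smul_eq_mul, ← mul_assoc, this, ← Real.rpow_add hy0]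
      have he : (d:ℝ) - 1 + -(d:ℝ) = -1 := by ring
      rw [he, Real.rpow_neg_one]
    have himg : (fun t : ℝ => Real.exp (l * t)) '' univ = Ioi (0:ℝ) := by
      rw [image_univ]
      have hco : (fun t : ℝ => Real.exp (l * t)) = Real.exp ∘ (fun t : ℝ => l * t) := rfl
      rw [hco, Set.range_comp, Function.Surjective.range_eq (mul_left_surjective₀ hl.ne'),
        Set.image_univ, Real.range_exp]
    have hderiv : ∀ t ∈ (univ : Set ℝ), HasDerivWithinAt (fun t : ℝ => Real.exp (l * t))
        (Real.exp (l * t) * l) univ t := by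
      intro t _
      have := ((Real.hasDerivAt_exp (l*t)).comp t ((hasDerivAt_id t).const_mul l)).hasDerivWithinAt
        (s := (univ : Set ℝ))
      simpa [Function.comp_def] using this
    have hinj : InjOn (fun t : ℝ => Real.exp (l * t)) univ := by
      intro a _ b _ hab
      have := Real.exp_injective hab
      exact mul_left_cancel₀ hl.ne' this
    have step2 := integral_image_eq_integral_abs_deriv_smul MeasurableSet.univ hderiv hinj
      (fun y => y⁻¹ * h (Real.log y / l))
    rw [himg] at step2
    rw [step1, step2]
    rw [Measure.restrict_univ]
    have : ∀ t : ℝ, |Real.exp (l*t) * l| • ((Real.exp (l*t))⁻¹ * h (Real.log (Real.exp (l*t)) / l))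
        = l * h t := by
      intro t
      have he : (0:ℝ) < Real.exp (l*t) := Real.exp_pos _
      rw [smul_eq_mul, abs_of_pos (by positivity), Real.log_exp,
        mul_div_cancel_left₀ _ hl.ne']
      field_simp
    simp_rw [this]
    rw [MeasureTheory.integral_const_mul]
  rw [hIoi]
  rw [nsmul_eq_mul, smul_eq_mul]
  rw [measureReal_def]
  ring

end Stmt9Aux

namespace Stmt9Aux

lemma g_C1 : ContDiff ℝ 1 g := g_smooth.of_le (by exact_mod_cast le_top)

lemma int_g_dg : ∫ s : ℝ, g s * deriv g s = 0 := by
  set F : ℝ → ℝ := fun s => g s * g s with hF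
  have hFd : ∀ s, HasDerivAt F (2 * (g s * deriv g s)) s := by
    intro s
    have hg : HasDerivAt g (deriv g s) s :=
      ((g_smooth.differentiable (by simp)) s).hasDerivAt
    have : HasDerivAt (fun s => g s * g s) (deriv g s * g s + g s * deriv g s) s := hg.mul hg
    convert this using 1; ring
  have hF1 : ContDiff ℝ 1 F := g_C1.mul g_C1
  have hFc : HasCompactSupport F := g_cpt.mul_left
  have hderivF : deriv F = fun s => 2 * (g s * deriv g s) := funext fun s => (hFd s).deriv
  have hDFc : HasCompactSupport (deriv F) := hFc.deriv
  have hDFcont : Continuous (deriv F) := hF1.continuous_deriv le_rfl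
  have hint : Integrable (deriv F) volume := hDFcont.integrable_of_hasCompactSupport hDFc
  have h1 : ∫ s in Iic (0:ℝ), deriv F s = F 0 := HasCompactSupport.integral_Iic_deriv_eq hF1 hFc 0
  have h2 : ∫ s in Ioi (0:ℝ), deriv F s = -F 0 := HasCompactSupport.integral_Ioi_deriv_eq hF1 hFc 0
  have htot : ∫ s, deriv F s = 0 := by
    rw [← intervalIntegral.integral_Iic_add_Ioi (hint.integrableOn) (hint.integrableOn), h1, h2]; ring
  rw [hderivF] at htot
  rw [MeasureTheory.integral_const_mul] at htot
  linarith

lemma support_pos_integral {f : ℝ → ℝ} (hf : Continuous f) (hc : HasCompactSupport f)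
    (hnn : ∀ s, 0 ≤ f s) {s₀ : ℝ} (hs₀ : f s₀ ≠ 0) : 0 < ∫ s, f s := by
  rw [integral_pos_iff_support_of_nonneg hnn (hf.integrable_of_hasCompactSupport hc)]
  have hopen : IsOpen (support f) := hf.isOpen_support
  exact hopen.measure_pos volume ⟨s₀, hs₀⟩
end Stmt9Aux

namespace Stmt9Aux
variable {d : ℕ} {l : ℝ}

lemma rpow_of_sq {r : ℝ} (hr : 0 ≤ r) (a : ℝ) : ((r^2 : ℝ) ^ a) = r ^ (2*a) := by
  rw [← Real.rpow_natCast r 2, ← Real.rpow_mul hr]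
  norm_num

lemma sarg_sq (hl : 0 < l) {r : ℝ} (hr : 0 < r) : sarg l (r^2) = Real.log r / l := by
  rw [sarg, Real.log_pow]
  push_cast
  field_simp

lemma rpow_sq_mul_sq {r : ℝ} (hr : 0 < r) {a b : ℝ} (hab : 2*a + 2 = b) :
    (r ^ a)^2 * r^2 = r ^ b := by
  rw [← Real.rpow_natCast (r ^ a) 2, ← Real.rpow_mul hr.le, ← Real.rpow_natCast r 2,
    ← Real.rpow_add hr]
  congr 1
  push_cast
  linarith

lemma dψ_eq (hl : 0 < l) {r : ℝ} (hr : 0 < r) :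
    dψ d l (r^2) = r ^ (-(cst d) - 2) *
      ((-(cst d)/2) * g (Real.log r / l) + (1/(2*l)) * deriv g (Real.log r / l)) := by
  rw [dψ, sarg_sq hl hr, rpow_of_sq hr.le]
  congr 2
  ring

lemma ψ_eq (hl : 0 < l) {r : ℝ} (hr : 0 < r) :
    ψ d l (r^2) = r ^ (-(cst d)) * g (Real.log r / l) := by
  rw [ψ, sarg_sq hl hr, rpow_of_sq hr.le]
  congr 2
  ring

lemma dcast_pos (hd : 3 ≤ d) : (0:ℝ) < (d:ℝ) := by
  exact_mod_cast (by omega : 0 < d)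

lemma id1 (hd : 3 ≤ d) (hl : 0 < l) (x : Euc d) :
    ‖DU d l x‖^2 = ‖x‖ ^ (-(d:ℝ)) *
      (fun s => (cst d * g s - deriv g s / l)^2) (Real.log ‖x‖ / l) := by
  have hnorm : ‖DU d l x‖ = |2 * dψ d l (‖x‖^2)| * ‖x‖ := by
    simp only [DU]
    rw [norm_smul (2 * dψ d l (‖x‖^2)) ((innerSL ℝ) x), innerSL_apply_norm, Real.norm_eq_abs]
  rcases eq_or_lt_of_le (norm_nonneg x) with h0 | hr
  · rw [hnorm, ← h0, Real.zero_rpow (neg_ne_zero.2 (dcast_pos hd).ne')]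
    simp
  · set r := ‖x‖ with hrdef
    rw [hnorm, dψ_eq hl hr]
    set Q := (-(cst d)/2) * g (Real.log r / l) + (1/(2*l)) * deriv g (Real.log r / l) with hQ
    have hq : (|2 * (r ^ (-(cst d) - 2) * Q)|)^2 * r^2 = ((r ^ (-(cst d) - 2))^2 * r^2) * (2*Q)^2 := by
      rw [sq_abs]; ring
    have hkey : (r ^ (-(cst d) - 2))^2 * r^2 = r ^ (-(d:ℝ)) := by
      apply rpow_sq_mul_sq hr
      rw [cst]; ring
    rw [mul_pow, hq, hkey]
    congr 1
    rw [hQ]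
    field_simp
    ring

lemma id2 (hd : 3 ≤ d) (hl : 0 < l) (x : Euc d) :
    (U d l x)^2 / ‖x‖^2 = ‖x‖ ^ (-(d:ℝ)) *
      (fun s => (g s)^2) (Real.log ‖x‖ / l) := by
  rcases eq_or_lt_of_le (norm_nonneg x) with h0 | hr
  · have hU : U d l x = 0 := U_zero_small d hl (by rw [← h0]; norm_num)
    rw [hU, ← h0, Real.zero_rpow (neg_ne_zero.2 (dcast_pos hd).ne')]
    simp
  · set r := ‖x‖ with hrdef
    have hkey : (r ^ (-(cst d)))^2 = r ^ ((-(d:ℝ)) + 2) := by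
      rw [← Real.rpow_natCast (r ^ (-(cst d))) 2, ← Real.rpow_mul hr.le]
      congr 1
      push_cast [cst]; ring
    rw [U, ψ_eq hl hr, mul_pow, hkey, Real.rpow_add hr, Real.rpow_two]
    have h2 : (r:ℝ)^2 ≠ 0 := by positivity
    field_simp

lemma id3 (hd : 3 ≤ d) (hl : 0 < l) (x : Euc d) :
    ‖U d l x‖ ^ (2*(d:ℝ)/((d:ℝ)-2)) = ‖x‖ ^ (-(d:ℝ)) *
      (fun s => (g s) ^ (2*(d:ℝ)/((d:ℝ)-2))) (Real.log ‖x‖ / l) := by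
  have h3 : (3:ℝ) ≤ (d:ℝ) := by exact_mod_cast hd
  have hP : (0:ℝ) < 2*(d:ℝ)/((d:ℝ)-2) := by
    apply div_pos (by linarith) (by linarith)
  rcases eq_or_lt_of_le (norm_nonneg x) with h0 | hr
  · have hU : U d l x = 0 := U_zero_small d hl (by rw [← h0]; norm_num)
    rw [hU, ← h0, Real.zero_rpow (neg_ne_zero.2 (dcast_pos hd).ne')]
    simp [Real.zero_rpow hP.ne']
  · set r := ‖x‖ with hrdef
    rw [U, ψ_eq hl hr]
    have hg0 : (0:ℝ) ≤ r ^ (-(cst d)) := Real.rpow_nonneg hr.le _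
    rw [Real.norm_eq_abs, abs_of_nonneg (mul_nonneg hg0 (g_nonneg _)),
      Real.mul_rpow hg0 (g_nonneg _), ← Real.rpow_mul hr.le]
    have hne : ((d:ℝ)-2) ≠ 0 := by linarith
    have hexp : -(cst d) * (2*(d:ℝ)/((d:ℝ)-2)) = -(d:ℝ) := by
      rw [cst]; field_simp
    rw [hexp]

end Stmt9Aux

namespace Stmt9Aux
variable {d : ℕ} {l : ℝ}

def W (d : ℕ) : ℝ := (d:ℝ) * (volume (Metric.ball (0:Euc d) 1)).toReal

lemma W_pos (hd : 3 ≤ d) : 0 < W d := by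
  apply mul_pos (dcast_pos hd)
  apply ENNReal.toReal_pos (measure_ball_pos _ _ one_pos).ne' measure_ball_lt_top.ne

lemma intDU (hd : 3 ≤ d) (hl : 0 < l) :
    ∫ x : Euc d, ‖DU d l x‖^2 = W d * l * ∫ s, (cst d * g s - deriv g s / l)^2 := by
  have : ∫ x : Euc d, ‖DU d l x‖^2
      = ∫ x : Euc d, ‖x‖ ^ (-(d:ℝ)) * (fun s => (cst d * g s - deriv g s / l)^2) (Real.log ‖x‖ / l) := by
    congr 1
    funext x
    exact id1 hd hl x
  rw [this]
  exact master hd hl (fun s => (cst d * g s - deriv g s / l)^2)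

lemma intU2 (hd : 3 ≤ d) (hl : 0 < l) :
    ∫ x : Euc d, (U d l x)^2 / ‖x‖^2 = W d * l * ∫ s, (g s)^2 := by
  have : ∫ x : Euc d, (U d l x)^2 / ‖x‖^2
      = ∫ x : Euc d, ‖x‖ ^ (-(d:ℝ)) * (fun s => (g s)^2) (Real.log ‖x‖ / l) := by
    congr 1
    funext x
    exact id2 hd hl x
  rw [this]
  exact master hd hl (fun s => (g s)^2)

lemma intU3 (hd : 3 ≤ d) (hl : 0 < l) :
    ∫ x : Euc d, ‖U d l x‖ ^ (2*(d:ℝ)/((d:ℝ)-2))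
      = W d * l * ∫ s, (g s) ^ (2*(d:ℝ)/((d:ℝ)-2)) := by
  have : ∫ x : Euc d, ‖U d l x‖ ^ (2*(d:ℝ)/((d:ℝ)-2))
      = ∫ x : Euc d, ‖x‖ ^ (-(d:ℝ)) * (fun s => (g s) ^ (2*(d:ℝ)/((d:ℝ)-2))) (Real.log ‖x‖ / l) := by
    congr 1
    funext x
    exact id3 hd hl x
  rw [this]
  exact master hd hl (fun s => (g s) ^ (2*(d:ℝ)/((d:ℝ)-2)))

lemma int_g2 : Integrable (fun s : ℝ => (g s)^2) volume := by
  have h : Integrable (fun s : ℝ => g s * g s) volume :=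
    (g_cont.mul g_cont).integrable_of_hasCompactSupport g_cpt.mul_left
  simpa [sq] using h

lemma int_gdg : Integrable (fun s : ℝ => g s * deriv g s) volume :=
  (g_cont.mul dg_cont).integrable_of_hasCompactSupport dg_cpt.mul_left

lemma int_dg2 : Integrable (fun s : ℝ => (deriv g s)^2) volume := by
  have h : Integrable (fun s : ℝ => deriv g s * deriv g s) volume :=
    (dg_cont.mul dg_cont).integrable_of_hasCompactSupport dg_cpt.mul_left
  simpa [sq] using h

lemma int_h1 (hl : 0 < l) :
    ∫ s, (cst d * g s - deriv g s / l)^2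
      = (cst d)^2 * (∫ s, (g s)^2) + (1/l^2) * ∫ s, (deriv g s)^2 := by
  have hid : ∀ s : ℝ, (cst d * g s - deriv g s / l)^2
      = ((cst d)^2 * (g s)^2 + (1/l^2) * (deriv g s)^2) - (2*cst d/l) * (g s * deriv g s) := by
    intro s
    field_simp
    ring
  have h1 : Integrable (fun s : ℝ => (cst d)^2 * (g s)^2 + (1/l^2) * (deriv g s)^2) volume :=
    (int_g2.const_mul _).add (int_dg2.const_mul _)
  have h2 : Integrable (fun s : ℝ => (2*cst d/l) * (g s * deriv g s)) volume :=
    int_gdg.const_mul _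
  calc ∫ s, (cst d * g s - deriv g s / l)^2
      = ∫ s, (((cst d)^2 * (g s)^2 + (1/l^2) * (deriv g s)^2)
          - (2*cst d/l) * (g s * deriv g s)) := by
        congr 1; funext s; exact hid s
    _ = (∫ s, ((cst d)^2 * (g s)^2 + (1/l^2) * (deriv g s)^2))
          - ∫ s, (2*cst d/l) * (g s * deriv g s) := integral_sub h1 h2
    _ = (cst d)^2 * (∫ s, (g s)^2) + (1/l^2) * (∫ s, (deriv g s)^2)
          - (2*cst d/l) * ∫ s, (g s * deriv g s) := by
        rw [integral_add (int_g2.const_mul _) (int_dg2.const_mul _),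
          MeasureTheory.integral_const_mul, MeasureTheory.integral_const_mul,
          MeasureTheory.integral_const_mul]
    _ = (cst d)^2 * (∫ s, (g s)^2) + (1/l^2) * ∫ s, (deriv g s)^2 := by
        rw [int_g_dg]; ring

lemma G2_pos : 0 < ∫ s, (g s)^2 := by
  have hcont : Continuous (fun s : ℝ => (g s)^2) := g_cont.pow 2
  have hcpt : HasCompactSupport (fun s : ℝ => (g s)^2) :=
    g_cpt.comp_left (g := fun t : ℝ => t^2) (by norm_num)
  exact support_pos_integral hcont hcpt (fun s => sq_nonneg _) (s₀ := 3/2)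
    (by rw [g_one]; norm_num)
end Stmt9Aux

namespace Stmt9Aux
variable {d : ℕ} {l : ℝ}

lemma G1_pos : 0 < ∫ s, (deriv g s)^2 := by
  obtain ⟨s₀, hs₀⟩ : ∃ s : ℝ, deriv g s ≠ 0 := by
    by_contra hcon
    push_neg at hcon
    have hconst := is_const_of_deriv_eq_zero
      (g_smooth.differentiable (by simp)) hcon (3/2) 0
    rw [g_one, g_zero (by norm_num : (0:ℝ) ∉ Icc (1:ℝ) 2)] at hconst
    exact one_ne_zero hconst
  have hcont : Continuous (fun s : ℝ => (deriv g s)^2) := dg_cont.pow 2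
  have hcpt : HasCompactSupport (fun s : ℝ => (deriv g s)^2) :=
    dg_cpt.comp_left (g := fun t : ℝ => t^2) (by norm_num)
  exact support_pos_integral hcont hcpt (fun s => sq_nonneg _) (pow_ne_zero 2 hs₀)

lemma G3_pos (hd : 3 ≤ d) : 0 < ∫ s, (g s) ^ (2*(d:ℝ)/((d:ℝ)-2)) := by
  have h3 : (3:ℝ) ≤ (d:ℝ) := by exact_mod_cast hd
  have hP : (0:ℝ) < 2*(d:ℝ)/((d:ℝ)-2) := div_pos (by linarith) (by linarith)
  have hcont : Continuous (fun s : ℝ => (g s) ^ (2*(d:ℝ)/((d:ℝ)-2))) :=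
    g_cont.rpow_const (fun s => Or.inr hP.le)
  have hcpt : HasCompactSupport (fun s : ℝ => (g s) ^ (2*(d:ℝ)/((d:ℝ)-2))) :=
    g_cpt.comp_left (g := fun t : ℝ => t ^ (2*(d:ℝ)/((d:ℝ)-2))) (Real.zero_rpow hP.ne')
  apply support_pos_integral hcont hcpt (fun s => Real.rpow_nonneg (g_nonneg s) _) (s₀ := 3/2)
  rw [g_one, Real.one_rpow]
  norm_num

lemma N_eq (hd : 3 ≤ d) (hl : 0 < l) :
    (eLpNorm (U d l) (ENNReal.ofReal (2*(d:ℝ)/((d:ℝ)-2))) volume).toReal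
      = (W d * l * ∫ s, (g s) ^ (2*(d:ℝ)/((d:ℝ)-2))) ^ (2*(d:ℝ)/((d:ℝ)-2))⁻¹ := by
  have h3 : (3:ℝ) ≤ (d:ℝ) := by exact_mod_cast hd
  have hP : (0:ℝ) < 2*(d:ℝ)/((d:ℝ)-2) := div_pos (by linarith) (by linarith)
  have hp0 : ENNReal.ofReal (2*(d:ℝ)/((d:ℝ)-2)) ≠ 0 := (ENNReal.ofReal_pos.mpr hP).ne'
  have hpT : ENNReal.ofReal (2*(d:ℝ)/((d:ℝ)-2)) ≠ ⊤ := ENNReal.ofReal_ne_top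
  rw [MemLp.eLpNorm_eq_integral_rpow_norm hp0 hpT (U_memℒp hl _)]
  rw [ENNReal.toReal_ofReal (Real.rpow_nonneg
    (integral_nonneg (fun x => Real.rpow_nonneg (norm_nonneg _) _)) _)]
  simp only [ENNReal.toReal_ofReal hP.le]
  rw [intU3 hd hl]

lemma no_scaling {K1 K2 e f : ℝ} (hK1 : 0 < K1) (hK2 : 0 < K2) (hef : e ≠ f)
    (h : ∀ l : ℝ, 0 < l → K1 * l ^ e ≤ K2 * l ^ f) : False := by
  have hβ0 : e - f ≠ 0 := sub_ne_zero.2 hef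
  set ρ := 2 * K2 / K1 with hρdef
  have hρ : 0 < ρ := by positivity
  set l := ρ ^ (e - f)⁻¹ with hldef
  have hlpos : 0 < l := Real.rpow_pos_of_pos hρ _
  have h1 := h l hlpos
  have hle : l ^ e = l ^ f * ρ := by
    rw [hldef, ← Real.rpow_mul hρ.le, ← Real.rpow_mul hρ.le]
    nth_rewrite 3 [show ρ = ρ ^ (1:ℝ) from (Real.rpow_one ρ).symm]
    rw [← Real.rpow_add hρ]
    congr 1
    field_simp
    ring
  rw [hle] at h1
  have hlf : 0 < l ^ f := Real.rpow_pos_of_pos hlpos _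
  have hK1ρ : K1 * ρ = 2 * K2 := by
    rw [hρdef]; field_simp
  nlinarith

end Stmt9Aux


open Stmt9Aux

/-- For `d ≥ 3`, `2* = 2d/(d−2)` and `θ ∈ [0,1]` with `θ ≠ 1/d`, there is NO
constant `C > 0` such that
`(∫ |∇u|² − ((d−2)/2)² ∫ |u|²/|x|²)^θ · (∫ |u|²/|x|²)^(1−θ) ≥ C ‖u‖_{L^{2*}}²`
holds for all radially symmetric `u ∈ Ḣ¹(ℝ^d)`. -/
theorem stmt9 (d : ℕ) (hd : 3 ≤ d) (θ : ℝ) (hθ : θ ∈ Set.Icc (0 : ℝ) 1)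
    (hθ' : θ ≠ 1 / (d : ℝ)) :
    ¬ ∃ C : ℝ, 0 < C ∧
      ∀ (u : EuclideanSpace ℝ (Fin d) → ℝ)
        (Du : EuclideanSpace ℝ (Fin d) → (EuclideanSpace ℝ (Fin d) →L[ℝ] ℝ)),
        HasWeakGradient u Du →
        IsRadial u →
        MemLp u (ENNReal.ofReal (2 * d / ((d : ℝ) - 2))) volume →
        MemLp (fun x => ‖Du x‖) 2 volume →
        C * (eLpNorm u (ENNReal.ofReal (2 * d / ((d : ℝ) - 2))) volume).toReal ^ 2 ≤
          ((∫ x, ‖Du x‖ ^ 2) - (((d : ℝ) - 2) / 2) ^ 2 * ∫ x, (u x) ^ 2 / ‖x‖ ^ 2) ^ θ *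
            (∫ x, (u x) ^ 2 / ‖x‖ ^ 2) ^ (1 - θ) := by

  rintro ⟨C, hC, hin⟩
  have h3 : (3:ℝ) ≤ (d:ℝ) := by exact_mod_cast hd
  have hdpos : (0:ℝ) < (d:ℝ) := by linarith
  have hP : (0:ℝ) < 2*(d:ℝ)/((d:ℝ)-2) := div_pos (by linarith) (by linarith)
  have hW := W_pos hd
  have hG1 := G1_pos
  have hG2 := G2_pos
  have hG3 := G3_pos hd
  set P : ℝ := 2*(d:ℝ)/((d:ℝ)-2) with hPdef
  set G1 : ℝ := ∫ s, (deriv g s)^2 with hG1def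
  set G2 : ℝ := ∫ s, (g s)^2 with hG2def
  set G3 : ℝ := ∫ s, (g s) ^ P with hG3def
  have key : ∀ l : ℝ, 0 < l →
      (C * (W d * G3) ^ (P⁻¹ * 2)) * l ^ (P⁻¹ * 2) ≤
        ((W d * G1)^θ * (W d * G2)^(1-θ)) * l ^ (1 - 2*θ) := by
    intro l hl
    have h := hin (U d l) (DU d l) (U_weakGradient hl) U_radial (U_memℒp hl _) (DU_memℒp hl)
    rw [intDU hd hl, intU2 hd hl, int_h1 hl, N_eq hd hl] at h
    have hA : W d * l * ((cst d)^2 * G2 + (1/l^2) * G1)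
        - (((d:ℝ)-2)/2)^2 * (W d * l * G2) = (W d * G1) / l := by
      rw [cst]
      field_simp
      ring
    rw [hA] at h
    have hLHS : C * ((W d * l * G3) ^ P⁻¹)^2
        = (C * (W d * G3) ^ (P⁻¹ * 2)) * l ^ (P⁻¹ * 2) := by
      rw [← Real.rpow_natCast ((W d * l * G3) ^ P⁻¹) 2, ← Real.rpow_mul (by positivity)]
      rw [show W d * l * G3 = (W d * G3) * l from by ring]
      rw [Real.mul_rpow (by positivity) hl.le]
      push_cast
      ring
    have hRHS : ((W d * G1) / l)^θ * (W d * l * G2)^(1-θ)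
        = ((W d * G1)^θ * (W d * G2)^(1-θ)) * l ^ (1 - 2*θ) := by
      rw [show W d * l * G2 = (W d * G2) * l from by ring]
      rw [Real.div_rpow (by positivity) hl.le, Real.mul_rpow (by positivity) hl.le]
      rw [show (1:ℝ) - 2*θ = (1-θ) - θ from by ring, Real.rpow_sub hl (1-θ) θ]
      have hgen : ∀ a b x y : ℝ, x ≠ 0 → a/x*(b*y) = a*b*(y/x) := by
        intros a b x y hx; field_simp
      exact hgen _ _ _ _ (Real.rpow_pos_of_pos hl θ).ne'
    rw [hLHS] at h
    rw [← hRHS]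
    exact h
  have hef : P⁻¹ * 2 ≠ 1 - 2*θ := by
    have hPinv : P⁻¹ = ((d:ℝ)-2)/(2*(d:ℝ)) := by rw [hPdef, inv_div]
    intro hcon
    apply hθ'
    rw [hPinv] at hcon
    rw [eq_div_iff hdpos.ne']
    field_simp at hcon
    linarith
  exact no_scaling (by positivity) (mul_pos (Real.rpow_pos_of_pos (mul_pos hW hG1) _)
    (Real.rpow_pos_of_pos (mul_pos hW hG2) _)) hef key
end
end

section
/- Let d ≥ 3 and 2* = 2d/(d−2). There exists a constant C > 0 such that for every absolutely continuous function f : (0,∞) → ℝ with ∫_0^∞ r |f'(r)|² dr < ∞ and ∫_0^∞ |f(r)|²/r dr < ∞, one has ( ∫_0^∞ r |f'(r)|² dr )^{1/d} · ( ∫_0^∞ |f(r)|²/r dr )^{1−1/d} ≥ C ( ∫_0^∞ |f(r)|^{2*}/r dr )^{2/2*}. -/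
open MeasureTheory
open scoped ENNReal

/-- `f` is (locally) absolutely continuous on `(0,∞)` with derivative `f'`:
the fundamental theorem of calculus holds on every compact subinterval. -/
def ACDerivOn (f f' : ℝ → ℝ) : Prop :=
  ∀ a b : ℝ, 0 < a → a ≤ b →
    IntegrableOn f' (Set.Icc a b) ∧ f b - f a = ∫ t in a..b, f' t

/-!
Write `A = ∫ r f'²` and `B = ∫ f²/r`. Integrating `(f²)' = 2 f f'` over `[a, b]` and applying
Cauchy–Schwarz with the weights `1/r` and `r` gives `f(b)² ≤ f(a)² + 2 √(A B)`. Since `∫_0 dr/r`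
diverges while `B < ∞`, `f(a)²` is arbitrarily small for some `a ∈ (0, b]`, so `sup f² ≤ 2 √(A B)`.
Then `|f|^{2*} ≤ (sup f²)^{2*/2 - 1} f²`, and integrating against `dr/r` and raising to the power
`2/2*` gives the inequality with `C = 1/2`, because `(2*/2 - 1) · 2/2* = 2/d`.
-/

open Set ENNReal

theorem lintegral_Ioc_ofReal_inv_eq_top {b : ℝ} (hb : 0 < b) :
    ∫⁻ r in Ioc 0 b, ENNReal.ofReal r⁻¹ = ∞ := by
  by_contra h
  have hint : IntegrableOn (fun r : ℝ ↦ r⁻¹) (Ioc 0 b) :=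
    ⟨measurable_inv.aestronglyMeasurable, (hasFiniteIntegral_iff_ofReal
      (ae_restrict_of_forall_mem measurableSet_Ioc fun r hr ↦ inv_nonneg.2 hr.1.le)).2
        (lt_top_iff_ne_top.2 h)⟩
  have := intervalIntegrable_inv_iff.1
    ((intervalIntegrable_iff_integrableOn_Ioc_of_le hb.le).2 hint)
  simp [hb.ne, hb.le] at this

theorem exists_lt_of_lintegral_div_lt_top {g : ℝ → ℝ}
    (hg : ∫⁻ r in Ioi 0, ENNReal.ofReal (g r / r) < ∞) {ε b : ℝ} (hε : 0 < ε) (hb : 0 < b) :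
    ∃ a ∈ Ioc 0 b, g a < ε := by
  by_contra! h
  refine hg.ne (top_le_iff.1 ?_)
  calc ∞ = ∫⁻ r in Ioc 0 b, ENNReal.ofReal ε * ENNReal.ofReal r⁻¹ := by
        rw [lintegral_const_mul' _ _ ofReal_ne_top, lintegral_Ioc_ofReal_inv_eq_top hb,
          mul_top (by simpa using hε)]
    _ ≤ ∫⁻ r in Ioc 0 b, ENNReal.ofReal (g r / r) := by
        refine setLIntegral_mono' measurableSet_Ioc fun r hr ↦ ?_
        rw [← ofReal_mul hε.le, div_eq_mul_inv]
        exact ofReal_le_ofReal (mul_le_mul_of_nonneg_right (h r hr) (inv_nonneg.2 hr.1.le))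
    _ ≤ ∫⁻ r in Ioi 0, ENNReal.ofReal (g r / r) := lintegral_mono_set Ioc_subset_Ioi_self

theorem lintegral_enorm_mul_le_rpow_mul_rpow {s : Set ℝ} (hs : MeasurableSet s) (hs0 : s ⊆ Ioi 0)
    {g h : ℝ → ℝ} (hg : AEMeasurable g (volume.restrict s))
    (hh : AEMeasurable h (volume.restrict s)) :
    ∫⁻ t in s, ‖g t‖ₑ * ‖h t‖ₑ ≤
      (∫⁻ t in s, ENNReal.ofReal (g t ^ 2 / t)) ^ (1 / 2 : ℝ) *
        (∫⁻ t in s, ENNReal.ofReal (t * h t ^ 2)) ^ (1 / 2 : ℝ) := by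
  set G : ℝ → ℝ≥0∞ := fun t ↦ ENNReal.ofReal (|g t| / √t)
  set H : ℝ → ℝ≥0∞ := fun t ↦ ENNReal.ofReal (√t * |h t|)
  have hGH : ∀ t ∈ s, ‖g t‖ₑ * ‖h t‖ₑ = (G * H) t := fun t ht ↦ by
    have : √t ≠ 0 := (Real.sqrt_pos.2 (hs0 ht)).ne'
    rw [Pi.mul_apply, Real.enorm_eq_ofReal_abs, Real.enorm_eq_ofReal_abs,
      ← ofReal_mul (abs_nonneg _), ← ofReal_mul (by positivity)]
    field_simp
  have hG : ∀ t ∈ s, G t ^ (2 : ℝ) = ENNReal.ofReal (g t ^ 2 / t) := fun t ht ↦ by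
    rw [ofReal_rpow_of_nonneg (by positivity) zero_le_two]
    norm_num [div_pow, Real.sq_sqrt (hs0 ht).le]
  have hH : ∀ t ∈ s, H t ^ (2 : ℝ) = ENNReal.ofReal (t * h t ^ 2) := fun t ht ↦ by
    rw [ofReal_rpow_of_nonneg (by positivity) zero_le_two]
    norm_num [mul_pow, Real.sq_sqrt (hs0 ht).le]
  rw [setLIntegral_congr_fun hs hGH, ← setLIntegral_congr_fun hs hG,
    ← setLIntegral_congr_fun hs hH]
  exact lintegral_mul_le_Lp_mul_Lq _ (Real.holderConjugate_iff.2 ⟨one_lt_two, by norm_num⟩)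
    (hg.abs.div Real.continuous_sqrt.measurable.aemeasurable).ennreal_ofReal
    (Real.continuous_sqrt.measurable.aemeasurable.mul hh.abs).ennreal_ofReal

theorem half_mul_rpow_le_of_sobolev_exponent {d : ℝ} (hd : 2 < d) (A B : ℝ≥0∞) :
    ENNReal.ofReal (1 / 2) *
        ((2 * B ^ (1 / 2 : ℝ) * A ^ (1 / 2 : ℝ)) ^ (2 * d / (d - 2) / 2 - 1) * B) ^
          (2 / (2 * d / (d - 2))) ≤
      A ^ (1 / d) * B ^ (1 - 1 / d) := by
  have hd0 : 0 < d := by linarith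
  have hd2 : 0 < d - 2 := by linarith
  set p := 2 * d / (d - 2)
  have hp : 0 < p := by positivity
  have hM : (p / 2 - 1) * (2 / p) = 2 / d := by simp only [p]; field_simp; ring
  have hA : 1 / 2 * (2 / d) = 1 / d := by ring
  have hB : 1 / 2 * (2 / d) + 2 / p = 1 - 1 / d := by simp only [p]; field_simp; ring
  have htwo : (2 : ℝ≥0∞) ^ (2 / d) ≤ 2 := by
    calc (2 : ℝ≥0∞) ^ (2 / d) ≤ 2 ^ (1 : ℝ) :=
          rpow_le_rpow_of_exponent_le one_le_two ((div_le_one hd0).2 hd.le)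
      _ = 2 := rpow_one 2
  calc ENNReal.ofReal (1 / 2) *
        ((2 * B ^ (1 / 2 : ℝ) * A ^ (1 / 2 : ℝ)) ^ (p / 2 - 1) * B) ^ (2 / p)
      = (ENNReal.ofReal (1 / 2) * 2 ^ (2 / d)) * (A ^ (1 / d) * B ^ (1 - 1 / d)) := by
        rw [mul_rpow_of_nonneg _ _ (by positivity), ← rpow_mul, hM,
          mul_rpow_of_nonneg _ _ (by positivity), mul_rpow_of_nonneg _ _ (by positivity),
          ← rpow_mul, ← rpow_mul, ← hB, rpow_add_of_nonneg _ _ (by positivity) (by positivity), hA]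
        ring
    _ ≤ 1 * (A ^ (1 / d) * B ^ (1 - 1 / d)) := by
        gcongr
        calc ENNReal.ofReal (1 / 2) * 2 ^ (2 / d) ≤ 2⁻¹ * 2 := by
              rw [ofReal_div_of_pos two_pos, ofReal_one, ofReal_ofNat, one_div]
              gcongr
          _ = 1 := ENNReal.inv_mul_cancel two_ne_zero ofNat_ne_top
    _ = A ^ (1 / d) * B ^ (1 - 1 / d) := one_mul _

namespace ACDerivOn

variable {f f' : ℝ → ℝ} {a b : ℝ}

theorem eqOn_add_primitive (hf : ACDerivOn f f') (ha : 0 < a) :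
    EqOn f (fun x ↦ f a + ∫ t in a..x, f' t) (Ici a) := fun x hx ↦ by
  linarith [(hf a x ha hx).2]

theorem intervalIntegrable (hf : ACDerivOn f f') (ha : 0 < a) (hab : a ≤ b) :
    IntervalIntegrable f' volume a b :=
  (intervalIntegrable_iff_integrableOn_Icc_of_le hab).2 (hf a b ha hab).1

theorem absolutelyContinuousOnInterval_primitive (hf : ACDerivOn f f') (ha : 0 < a)
    (hab : a ≤ b) :
    AbsolutelyContinuousOnInterval (fun x ↦ f a + ∫ t in a..x, f' t) a b :=
  (LipschitzWith.const (f a)).lipschitzOnWith.absolutelyContinuousOnInterval.add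
    ((hf.intervalIntegrable ha hab).absolutelyContinuousOnInterval_intervalIntegral (by simp))

theorem continuousOn_Icc (hf : ACDerivOn f f') (ha : 0 < a) (hab : a ≤ b) :
    ContinuousOn f (Icc a b) := by
  have := (hf.absolutelyContinuousOnInterval_primitive ha hab).continuousOn
  rw [uIcc_of_le hab] at this
  exact this.congr ((hf.eqOn_add_primitive ha).mono (Icc_subset_Ici_self : Icc a b ⊆ Ici a))

theorem continuousOn (hf : ACDerivOn f f') : ContinuousOn f (Ioi 0) := fun x hx ↦
  ((hf.continuousOn_Icc (half_pos hx) (by linarith [mem_Ioi.1 hx])).continuousAt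
    (Icc_mem_nhds (half_lt_self hx) (lt_add_one x))).continuousWithinAt

theorem sq_sub_sq (hf : ACDerivOn f f') (ha : 0 < a) (hab : a ≤ b) :
    f b ^ 2 - f a ^ 2 = ∫ t in a..b, 2 * f t * f' t := by
  -- `f` agrees on `[a, b]` with an absolutely continuous primitive of `f'`, whose derivative is
  -- `f'` almost everywhere by the Lebesgue differentiation theorem.
  have hF := hf.absolutelyContinuousOnInterval_primitive ha hab
  have hfF := (hf.eqOn_add_primitive ha).mono (Icc_subset_Ici_self : Icc a b ⊆ Ici a)
  rw [hfF ⟨le_rfl, hab⟩, hfF ⟨hab, le_rfl⟩, sq, sq, ← hF.integral_deriv_mul_eq_sub hF]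
  refine intervalIntegral.integral_congr_ae ?_
  filter_upwards [(hf.intervalIntegrable ha hab).ae_hasDerivAt_integral] with x hx hxab
  rw [uIoc_of_le hab] at hxab
  rw [uIcc_of_le hab] at hx
  have hx' : x ∈ Icc a b := Ioc_subset_Icc_self hxab
  rw [((hx hx' a ⟨le_rfl, hab⟩).const_add (f a)).deriv, hfF hx']
  ring

theorem ofReal_sq_le_add_lintegral (hf : ACDerivOn f f') (ha : 0 < a) (hab : a ≤ b) :
    ENNReal.ofReal (f b ^ 2) ≤ ENNReal.ofReal (f a ^ 2) + 2 * ∫⁻ t in Ioc a b, ‖f t‖ₑ * ‖f' t‖ₑ :=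
  calc ENNReal.ofReal (f b ^ 2)
      ≤ ENNReal.ofReal (f a ^ 2) + ENNReal.ofReal |∫ t in a..b, 2 * f t * f' t| := by
        rw [← ofReal_add (sq_nonneg _) (abs_nonneg _), ← hf.sq_sub_sq ha hab]
        exact ofReal_le_ofReal (by linarith [le_abs_self (f b ^ 2 - f a ^ 2)])
    _ ≤ ENNReal.ofReal (f a ^ 2) + ∫⁻ t in Ioc a b, ‖2 * f t * f' t‖ₑ := by
        rw [← Real.enorm_eq_ofReal_abs, intervalIntegral.integral_of_le hab]
        gcongr
        exact enorm_integral_le_lintegral_enorm _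
    _ = ENNReal.ofReal (f a ^ 2) + 2 * ∫⁻ t in Ioc a b, ‖f t‖ₑ * ‖f' t‖ₑ := by
        simp only [enorm_mul, mul_assoc]
        rw [lintegral_const_mul' _ _ enorm_ne_top, Real.enorm_eq_ofReal zero_le_two, ofReal_ofNat]

theorem ofReal_sq_le (hf : ACDerivOn f f')
    (hB : ∫⁻ r in Ioi 0, ENNReal.ofReal (f r ^ 2 / r) < ∞) (hb : 0 < b) :
    ENNReal.ofReal (f b ^ 2) ≤
      2 * (∫⁻ r in Ioi 0, ENNReal.ofReal (f r ^ 2 / r)) ^ (1 / 2 : ℝ) *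
        (∫⁻ r in Ioi 0, ENNReal.ofReal (r * f' r ^ 2)) ^ (1 / 2 : ℝ) := by
  set M := 2 * (∫⁻ r in Ioi 0, ENNReal.ofReal (f r ^ 2 / r)) ^ (1 / 2 : ℝ) *
    (∫⁻ r in Ioi 0, ENNReal.ofReal (r * f' r ^ 2)) ^ (1 / 2 : ℝ)
  have hstep : ∀ a ∈ Ioc 0 b, ENNReal.ofReal (f b ^ 2) ≤ ENNReal.ofReal (f a ^ 2) + M := by
    rintro a ⟨ha, hab⟩
    have hs : Ioc a b ⊆ Ioi 0 := fun t ht ↦ ha.trans ht.1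
    have hcs := lintegral_enorm_mul_le_rpow_mul_rpow measurableSet_Ioc hs
      ((hf.continuousOn.mono hs).aemeasurable measurableSet_Ioc)
      ((hf a b ha hab).1.mono_set Ioc_subset_Icc_self).aemeasurable
    calc ENNReal.ofReal (f b ^ 2)
        ≤ ENNReal.ofReal (f a ^ 2) + 2 * ∫⁻ t in Ioc a b, ‖f t‖ₑ * ‖f' t‖ₑ :=
          hf.ofReal_sq_le_add_lintegral ha hab
      _ ≤ ENNReal.ofReal (f a ^ 2) + M := by
          simp only [M, mul_assoc]
          gcongr
          exact hcs.trans (by gcongr)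
  refine le_of_forall_pos_le_add fun ε hε _ ↦ ?_
  obtain ⟨a, ha, hfa⟩ := exists_lt_of_lintegral_div_lt_top hB (NNReal.coe_pos.2 hε) hb
  calc ENNReal.ofReal (f b ^ 2) ≤ ENNReal.ofReal (f a ^ 2) + M := hstep a ha
    _ ≤ ENNReal.ofReal ε + M := by gcongr
    _ = M + ε := by rw [ofReal_coe_nnreal, add_comm]

theorem lintegral_rpow_div_le (hf : ACDerivOn f f')
    (hB : ∫⁻ r in Ioi 0, ENNReal.ofReal (f r ^ 2 / r) < ∞) {p : ℝ} (hp : 2 ≤ p) :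
    ∫⁻ r in Ioi 0, ENNReal.ofReal (|f r| ^ p / r) ≤
      (2 * (∫⁻ r in Ioi 0, ENNReal.ofReal (f r ^ 2 / r)) ^ (1 / 2 : ℝ) *
        (∫⁻ r in Ioi 0, ENNReal.ofReal (r * f' r ^ 2)) ^ (1 / 2 : ℝ)) ^ (p / 2 - 1) *
        ∫⁻ r in Ioi 0, ENNReal.ofReal (f r ^ 2 / r) := by
  have hpow : ∀ x : ℝ, |x| ^ p = (x ^ 2) ^ (p / 2 - 1) * x ^ 2 := fun x ↦ by
    rw [← sq_abs, ← Real.rpow_natCast, Nat.cast_ofNat, ← Real.rpow_mul (abs_nonneg x),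
      ← Real.rpow_add_of_nonneg (abs_nonneg x) (by linarith) zero_le_two]
    ring_nf
  have hmeas : AEMeasurable (fun r ↦ ENNReal.ofReal (f r ^ 2 / r)) (volume.restrict (Ioi 0)) :=
    (((hf.continuousOn.pow 2).div continuousOn_id fun r hr ↦ ne_of_gt hr).aemeasurable
      measurableSet_Ioi).ennreal_ofReal
  rw [← lintegral_const_mul'' _ hmeas]
  refine setLIntegral_mono' measurableSet_Ioi fun r hr ↦ ?_
  have hp' : 0 ≤ p / 2 - 1 := by linarith
  rw [hpow, mul_div_assoc, ofReal_mul (by positivity), ← ofReal_rpow_of_nonneg (sq_nonneg _) hp']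
  gcongr
  exact hf.ofReal_sq_le hB hr

end ACDerivOn

/-- Limiting 1D Caffarelli–Kohn–Nirenberg type inequality: for `d ≥ 3` and
`2* = 2d/(d−2)` there is `C > 0` such that for every absolutely continuous `f : (0,∞) → ℝ`
with `∫_0^∞ r |f'|² dr < ∞` and `∫_0^∞ |f|²/r dr < ∞`,
`(∫_0^∞ r |f'|² dr)^{1/d} (∫_0^∞ |f|²/r dr)^{1−1/d} ≥ C (∫_0^∞ |f|^{2*}/r dr)^{2/2*}`. -/
theorem stmt12 (d : ℕ) (hd : 3 ≤ d) :
    ∃ C : ℝ, 0 < C ∧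
      ∀ f f' : ℝ → ℝ, ACDerivOn f f' →
        (∫⁻ r in Set.Ioi (0 : ℝ), ENNReal.ofReal (r * f' r ^ 2)) < ⊤ →
        (∫⁻ r in Set.Ioi (0 : ℝ), ENNReal.ofReal (f r ^ 2 / r)) < ⊤ →
        ENNReal.ofReal C *
            (∫⁻ r in Set.Ioi (0 : ℝ),
                ENNReal.ofReal (|f r| ^ (2 * d / ((d : ℝ) - 2)) / r)) ^
              (2 / (2 * d / ((d : ℝ) - 2))) ≤
          (∫⁻ r in Set.Ioi (0 : ℝ), ENNReal.ofReal (r * f' r ^ 2)) ^ ((1 : ℝ) / d) *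
            (∫⁻ r in Set.Ioi (0 : ℝ), ENNReal.ofReal (f r ^ 2 / r)) ^ (1 - (1 : ℝ) / d) := by
  refine ⟨1 / 2, one_half_pos, fun f f' hf _ hB ↦ ?_⟩
  have hd2 : (2 : ℝ) < d := by exact_mod_cast hd
  have hp : 2 ≤ 2 * d / ((d : ℝ) - 2) := by
    rw [le_div_iff₀ (by linarith)]
    linarith
  exact le_trans (by gcongr; exact hf.lintegral_rpow_div_le hB hp)
    (half_mul_rpow_le_of_sobolev_exponent hd2 _ _)
end
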